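/- For every integer a ≥ 2, the Frobenius number of S(a), i.e. the greatest natural number not belonging to S(a), equals ⌈(a − 1)/2⌉·l_a − 1. -/

import Mathlib

/-- The Lucas sequence: l 0 = 2, l 1 = 1, l (n+2) = l (n+1) + l n. -/
def lucas : ℕ → ℕ
  | 0 => 2
  | 1 => 1
  | n + 2 => lucas (n + 1) + lucas n

/-- The modified (monotone) Lucas sequence: l̃ 0 = 1, l̃ 1 = 2, l̃ n = l n for n ≥ 2. -/
def ltil : ℕ → ℕ
  | 0 => 1
  | 1 => 2
  | n + 2 => lucas (n + 2)

/-- β x : minimal number of summands in a representation of x as a sum of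
modified Lucas numbers (with repetitions allowed). -/
noncomputable def beta (x : ℕ) : ℕ :=
  sInf {s : ℕ | ∃ k : ℕ, ∃ b : ℕ → ℕ,
    x = ∑ i ∈ Finset.range (k + 1), b i * ltil i ∧ s = ∑ i ∈ Finset.range (k + 1), b i}

/-- γ x : the greatest k with l̃ k ≤ x (for x ≥ 1). -/
noncomputable def gamma (x : ℕ) : ℕ := sSup {k : ℕ | ltil k ≤ x}

/-- S a : the additive submonoid of ℕ generated by {l_a} ∪ {l_a + l_n : n ∈ ℕ}. -/
def Sset (a : ℕ) : AddSubmonoid ℕ :=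
  AddSubmonoid.closure ({lucas a} ∪ {x : ℕ | ∃ n : ℕ, x = lucas a + lucas n})

/-- T a : the additive submonoid of ℕ generated by {l_a + l_n : n ∈ ℕ}. -/
def Tset (a : ℕ) : AddSubmonoid ℕ :=
  AddSubmonoid.closure {x : ℕ | ∃ n : ℕ, x = lucas a + lucas n}

/-!
An element of `S(a)` is `m l_a` plus a sum of at most `m` Lucas numbers. Greedily, every `r < l_a`
is a sum of at most `⌊a/2⌋ = ⌈(a-1)/2⌉` Lucas numbers, so every `x ≥ ⌊a/2⌋ l_a` lies in `S(a)`.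
Conversely, `d l_a - 1` is never a sum of `⌊a/2⌋ - d` or fewer Lucas numbers. One may assume the
representation sparse (distinct, pairwise non-consecutive indices), so that its sum is bounded as for
Zeckendorf representations. A summand `l_{a+k} = F_k l_{a-1} + F_{k+1} l_a` can then be traded to lower
`d`; when there is none, `d = 1` and the largest summand must be `l_{a-1}`, which lowers `a` by two.
Hence `⌊a/2⌋ l_a - 1 ∉ S(a)`.
-/

open Multiset Nat

lemma lucas_add_two (n : ℕ) : lucas (n + 2) = lucas (n + 1) + lucas n := rfl

lemma lucas_pos : ∀ n, 0 < lucas n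
  | 0 | 1 => by decide
  | n + 2 => by rw [lucas_add_two]; exact Nat.add_pos_right _ (lucas_pos n)

lemma lucas_le_lucas {m n : ℕ} (hm : 1 ≤ m) (h : m ≤ n) : lucas m ≤ lucas n := by
  induction n, h using Nat.le_induction with
  | base => exact le_rfl
  | succ n hmn ih =>
    obtain ⟨p, rfl⟩ : ∃ p, n = p + 1 := ⟨n - 1, by omega⟩
    rw [lucas_add_two]
    omega

lemma three_le_lucas {n : ℕ} (h : 2 ≤ n) : 3 ≤ lucas n :=
  lucas_le_lucas one_le_two h

lemma le_lucas : ∀ n, n ≤ lucas n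
  | 0 | 1 => by decide
  | n + 2 => by
    have := le_lucas (n + 1)
    have := lucas_pos n
    rw [lucas_add_two]; omega

lemma lucas_add (m n : ℕ) : lucas (m + n + 1) = lucas m * fib n + lucas (m + 1) * fib (n + 1) := by
  induction n using Nat.twoStepInduction with
  | zero => simp
  | one =>
    show lucas (m + 2) = lucas m * fib 1 + lucas (m + 1) * fib 2
    simp [lucas_add_two, add_comm]
  | more n ih ih' =>
    rw [show m + (n + 2) + 1 = m + n + 1 + 2 by ring, lucas_add_two, fib_add_two, fib_add_two,
      show m + n + 1 + 1 = m + (n + 1) + 1 by ring, ih, ih']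
    ring

lemma two_mul_lucas_add_two (n : ℕ) : 2 * lucas (n + 2) = lucas (n + 3) + lucas n := by
  rw [lucas_add_two (n + 1), lucas_add_two n]; ring

def lucasSum (S : Multiset ℕ) : ℕ := (S.map lucas).sum

@[simp] lemma lucasSum_zero : lucasSum 0 = 0 := rfl

@[simp] lemma lucasSum_cons (i : ℕ) (S : Multiset ℕ) : lucasSum (i ::ₘ S) = lucas i + lucasSum S := by
  simp [lucasSum]

@[simp] lemma lucasSum_add (S T : Multiset ℕ) : lucasSum (S + T) = lucasSum S + lucasSum T := by
  simp [lucasSum]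

@[simp] lemma lucasSum_replicate (n i : ℕ) : lucasSum (replicate n i) = n * lucas i := by
  simp [lucasSum]

lemma lucasSum_mono : Monotone lucasSum := by
  intro S T h
  obtain ⟨U, rfl⟩ := Multiset.le_iff_exists_add.1 h
  simp

lemma lucas_le_lucasSum {i : ℕ} {S : Multiset ℕ} (h : i ∈ S) : lucas i ≤ lucasSum S :=
  le_sum_of_mem (mem_map_of_mem lucas h)

def IsLucasSparse (S : Multiset ℕ) : Prop := S.Nodup ∧ ∀ i ∈ S, i + 1 ∉ S

lemma IsLucasSparse.mono {S T : Multiset ℕ} (hS : IsLucasSparse S) (hTS : T ≤ S) :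
    IsLucasSparse T :=
  ⟨nodup_of_le hTS hS.1, fun i hi hi1 => hS.2 i (mem_of_le hTS hi) (mem_of_le hTS hi1)⟩

theorem IsLucasSparse.lucasSum_le : ∀ {K : ℕ} {S : Multiset ℕ}, IsLucasSparse S →
    (∀ i ∈ S, i < K) → lucasSum S ≤ lucas K + 1
  | 0, S, hS, hK | 1, S, hS, hK => by
    have : S ≤ {0} := (le_iff_subset hS.1).2 fun i hi => by have := hK i hi; simp; omega
    exact (lucasSum_mono this).trans (by decide)
  | K + 2, S, hS, hK => by
    by_cases hmem : K + 1 ∈ S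
    · have hlt : ∀ j ∈ S.erase (K + 1), j < K := fun j hj => by
        have hjS := mem_of_mem_erase hj
        have h1 : j ≠ K + 1 := fun h => hS.1.notMem_erase (h ▸ hj)
        have h2 : j ≠ K := fun h => hS.2 j hjS (h ▸ hmem)
        have := hK j hjS
        omega
      have := IsLucasSparse.lucasSum_le (hS.mono (erase_le _ _)) hlt
      rw [← cons_erase hmem, lucasSum_cons, lucas_add_two]
      omega
    · have := IsLucasSparse.lucasSum_le hS (K := K + 1) fun j hj =>
        lt_of_le_of_ne (Nat.lt_succ_iff.1 (hK j hj)) fun h => hmem (h ▸ hj)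
      rw [lucas_add_two]
      omega

/-- The sparsification moves either merge two summands or replace `2 l_{n+2}` by `l_{n+3} + l_n`;
the latter keeps the number of summands but increases this weight. -/
def powSum (S : Multiset ℕ) : ℕ := (S.map (3 ^ ·)).sum

lemma powSum_le_card_mul (S : Multiset ℕ) : powSum S ≤ card S * 3 ^ lucasSum S := by
  have h := sum_le_card_nsmul (S.map (3 ^ ·)) (3 ^ lucasSum S) <| by
    simp only [mem_map]
    rintro _ ⟨i, hi, rfl⟩
    exact Nat.pow_le_pow_right (by norm_num) ((le_lucas i).trans (lucas_le_lucasSum hi))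
  simpa [powSum] using h

lemma exists_eq_cons_cons_of_not_isLucasSparse {S : Multiset ℕ} (hS : ¬IsLucasSparse S) :
    ∃ i j U, (i = j ∨ j = i + 1) ∧ S = i ::ₘ j ::ₘ U := by
  obtain ⟨i, j, hij, hi, hj⟩ : ∃ i j, (i = j ∨ j = i + 1) ∧ i ∈ S ∧ j ∈ S.erase i := by
    by_cases hnd : S.Nodup
    · obtain ⟨i, hi, hi1⟩ : ∃ i ∈ S, i + 1 ∈ S := by
        by_contra! h
        exact hS ⟨hnd, h⟩
      exact ⟨i, i + 1, Or.inr rfl, hi, (mem_erase_of_ne (by omega)).2 hi1⟩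
    · obtain ⟨i, hi⟩ : ∃ i, 1 < count i S := by
        by_contra! h
        exact hnd (nodup_iff_count_le_one.2 h)
      refine ⟨i, i, Or.inl rfl, one_le_count_iff_mem.1 (by omega), one_le_count_iff_mem.1 ?_⟩
      rw [count_erase_self]
      omega
  exact ⟨i, j, (S.erase i).erase j, hij, by rw [cons_erase hj, cons_erase hi]⟩

lemma exists_lucasSum_eq_of_not_isLucasSparse {S : Multiset ℕ} (hS : ¬IsLucasSparse S) :
    ∃ T, lucasSum T = lucasSum S ∧
      (card T < card S ∨ card T = card S ∧ powSum S < powSum T) := by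
  obtain ⟨i, j, U, hij, rfl⟩ := exists_eq_cons_cons_of_not_isLucasSparse hS
  rcases hij with rfl | rfl
  · obtain _ | _ | n := i
    · exact ⟨3 ::ₘ U, by simp [lucas]; omega, Or.inl (by simp)⟩
    · exact ⟨0 ::ₘ U, by simp [lucas]; omega, Or.inl (by simp)⟩
    · refine ⟨(n + 3) ::ₘ n ::ₘ U, ?_, Or.inr ⟨by simp, ?_⟩⟩
      · have := two_mul_lucas_add_two n
        simp only [lucasSum_cons, show n + 1 + 1 = n + 2 from rfl]
        omega
      · simp only [powSum, map_cons, sum_cons]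
        have : 0 < 3 ^ n := by positivity
        have : 3 ^ (n + 3) = 3 * 3 ^ (n + 1 + 1) := by ring
        omega
  · exact ⟨(i + 2) ::ₘ U, by simp [lucas_add_two]; omega, Or.inl (by simp)⟩

theorem exists_isLucasSparse_lucasSum_eq (S : Multiset ℕ) :
    ∃ T, IsLucasSparse T ∧ lucasSum T = lucasSum S ∧ card T ≤ card S := by
  by_cases hS : IsLucasSparse S
  · exact ⟨S, hS, rfl, le_rfl⟩
  obtain ⟨T, hsum, hdec⟩ := exists_lucasSum_eq_of_not_isLucasSparse hS
  obtain ⟨U, hU, hUsum, hUcard⟩ := exists_isLucasSparse_lucasSum_eq T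
  exact ⟨U, hU, hUsum.trans hsum, hUcard.trans (by omega)⟩
termination_by (card S, card S * 3 ^ lucasSum S - powSum S)
decreasing_by
  rw [Prod.lex_def]
  have := powSum_le_card_mul T
  rcases hdec with h | ⟨h, h'⟩
  · exact Or.inl h
  · rw [hsum, h] at this
    rw [hsum, h]
    exact Or.inr ⟨rfl, by omega⟩

theorem exists_lucasSum_eq_of_lt_lucas : ∀ {a r : ℕ}, 1 ≤ a → r < lucas a →
    ∃ S : Multiset ℕ, lucasSum S = r ∧ card S ≤ a / 2
  | 1, r, _, hr => ⟨0, by simp [lucas] at hr; simp [hr], by simp⟩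
  | 2, r, _, hr => by
    simp only [show lucas 2 = 3 from rfl] at hr
    interval_cases r
    · exact ⟨0, rfl, by simp⟩
    · exact ⟨{1}, rfl, by simp⟩
    · exact ⟨{0}, rfl, by simp⟩
  | a + 3, r, _, hr => by
    replace hr : r < lucas (a + 2) + lucas (a + 1) := hr
    by_cases h : r < lucas (a + 2)
    · obtain ⟨S, hS, hcard⟩ := exists_lucasSum_eq_of_lt_lucas (by omega) h
      exact ⟨S, hS, by omega⟩
    · obtain ⟨S, hS, hcard⟩ :=
        exists_lucasSum_eq_of_lt_lucas (a := a + 1) (r := r - lucas (a + 2)) (by omega) (by omega)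
      exact ⟨(a + 2) ::ₘ S, by simp [hS]; omega, by simp; omega⟩

lemma exists_lucasSum_add_fib_mul_eq {S : Multiset ℕ} {m k : ℕ} (h : m + k + 1 ∈ S) :
    ∃ U, lucasSum U + fib (k + 1) * lucas (m + 1) = lucasSum S ∧ card U + 1 = card S + fib k := by
  obtain ⟨V, rfl⟩ := exists_cons_of_mem h
  refine ⟨V + replicate (fib k) m, ?_, by simp; omega⟩
  simp only [lucasSum_add, lucasSum_replicate, lucasSum_cons, lucas_add]
  ring

theorem div_two_le_card_of_lucasSum_add_one_eq_lucas {a : ℕ} (S : Multiset ℕ)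
    (h : lucasSum S + 1 = lucas a) : a / 2 ≤ card S := by
  obtain ⟨T, hT, hsum, hcard⟩ := exists_isLucasSparse_lucasSum_eq S
  rw [← hsum] at h
  suffices a / 2 ≤ card T by omega
  rcases Nat.lt_or_ge a 2 with ha | ha
  · omega
  have hT0 : 0 < card T := card_pos.2 (by rintro rfl; have := three_le_lucas ha; simp at h; omega)
  obtain ⟨b, rfl⟩ := Nat.exists_eq_add_of_le' ha
  by_cases hmem : b + 1 ∈ T
  · have := div_two_le_card_of_lucasSum_add_one_eq_lucas (a := b) (T.erase (b + 1)) <| by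
      rw [← cons_erase hmem, lucasSum_cons, lucas_add_two] at h
      omega
    rw [← cons_erase hmem, card_cons]
    omega
  · have hlt : ∀ i ∈ T, i < b + 1 := fun i hi => by
      have : i < b + 2 := by
        by_contra! hi'
        have := lucas_le_lucas (by omega) hi'
        have := lucas_le_lucasSum hi
        omega
      have : i ≠ b + 1 := fun h => hmem (h ▸ hi)
      omega
    have := hT.lucasSum_le hlt
    rw [lucas_add_two] at h
    rcases Nat.lt_or_ge b 2 with hb | hb
    · omega
    · have := three_le_lucas hb
      omega
termination_by a

theorem lt_card_add_of_lucasSum_add_one_eq_mul_lucas {a d : ℕ} (S : Multiset ℕ)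
    (h : lucasSum S + 1 = d * lucas a) : a / 2 < card S + d := by
  obtain ⟨T, hT, hsum, hcard⟩ := exists_isLucasSparse_lucasSum_eq S
  rw [← hsum] at h
  suffices a / 2 < card T + d by omega
  have hd : 0 < d := Nat.pos_of_ne_zero (by rintro rfl; omega)
  rcases Nat.lt_or_ge a 2 with ha | ha
  · omega
  have hL := three_le_lucas ha
  by_cases hbig : ∃ i ∈ T, a ≤ i
  · obtain ⟨i, hi, hai⟩ := hbig
    obtain ⟨k, rfl⟩ : ∃ k, i = a - 1 + k + 1 := ⟨i - a, by omega⟩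
    -- trade `l_i` for `F_k` copies of `l_{a-1}`, lowering `d` by `F_{k+1}`
    obtain ⟨U, hU, hUcard⟩ := exists_lucasSum_add_fib_mul_eq hi
    rw [Nat.sub_add_cancel (by omega)] at hU
    have hfib : fib (k + 1) < d := by
      have : fib (k + 1) * lucas a < d * lucas a := by omega
      exact Nat.lt_of_mul_lt_mul_right this
    have : 0 < fib (k + 1) := fib_pos.2 (by omega)
    have := lt_card_add_of_lucasSum_add_one_eq_mul_lucas (a := a) (d := d - fib (k + 1)) U <| by
      rw [Nat.sub_mul]
      omega
    have := fib_le_fib_succ (n := k)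
    omega
  · push Not at hbig
    have := hT.lucasSum_le hbig
    have hd1 : d = 1 := by
      by_contra hd1
      have : 2 * lucas a ≤ d * lucas a := Nat.mul_le_mul_right _ (by omega)
      omega
    subst hd1
    have := div_two_le_card_of_lucasSum_add_one_eq_lucas (a := a) T (by omega)
    omega
termination_by d

theorem mem_Sset_iff {a x : ℕ} :
    x ∈ Sset a ↔ ∃ m S, card S ≤ m ∧ x = m * lucas a + lucasSum S := by
  constructor
  · intro hx
    induction hx using AddSubmonoid.closure_induction with
    | mem y hy =>
      rcases hy with rfl | ⟨n, rfl⟩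
      · exact ⟨1, 0, by simp, by simp⟩
      · exact ⟨1, {n}, by simp, by simp [lucasSum]⟩
    | zero => exact ⟨0, 0, le_rfl, by simp⟩
    | add y z _ _ hy hz =>
      obtain ⟨m, S, hS, rfl⟩ := hy
      obtain ⟨m', S', hS', rfl⟩ := hz
      exact ⟨m + m', S + S', by simp; omega, by simp; ring⟩
  · rintro ⟨m, S, hS, rfl⟩
    obtain ⟨k, rfl⟩ := Nat.exists_eq_add_of_le hS
    have hgen : ∀ y ∈ S.map (lucas a + lucas ·), y ∈ Sset a := by
      simp only [mem_map]
      rintro _ ⟨n, -, rfl⟩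
      exact AddSubmonoid.subset_closure (Or.inr ⟨n, rfl⟩)
    have hsum := AddSubmonoid.multiset_sum_mem _ _ hgen
    have hpow := nsmul_mem (AddSubmonoid.subset_closure (Or.inl rfl) : lucas a ∈ Sset a) k
    convert add_mem hsum hpow using 1
    simp [lucasSum, sum_map_add]
    ring

theorem frobenius_S (a : ℕ) (ha : 2 ≤ a) :
    IsGreatest {x : ℕ | x ∉ Sset a} ((a - 1 + 1) / 2 * lucas a - 1) := by
  rw [Nat.sub_add_cancel (by omega : 1 ≤ a)]
  have hL : 3 ≤ lucas a := three_le_lucas ha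
  have hF : lucas a ≤ a / 2 * lucas a := Nat.le_mul_of_pos_left _ (by omega)
  refine ⟨fun hmem => ?_, fun x hx => ?_⟩
  · obtain ⟨m, S, hSm, hx⟩ := mem_Sset_iff.1 hmem
    have hm : m < a / 2 := by
      have : m * lucas a < a / 2 * lucas a := by omega
      exact Nat.lt_of_mul_lt_mul_right this
    have := lt_card_add_of_lucasSum_add_one_eq_mul_lucas (a := a) (d := a / 2 - m) S <| by
      rw [Nat.sub_mul]
      omega
    omega
  · by_contra! hlt
    refine hx (mem_Sset_iff.2 ?_)
    have hr : x % lucas a < lucas a := Nat.mod_lt x (by omega)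
    obtain ⟨S, hS, hcard⟩ := exists_lucasSum_eq_of_lt_lucas (by omega) hr
    have hq : a / 2 ≤ x / lucas a := (Nat.le_div_iff_mul_le (by omega)).2 (by omega)
    exact ⟨x / lucas a, S, hcard.trans hq, by rw [hS, Nat.div_add_mod']⟩
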